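/- arXiv:1804.03795 — 3 statements merged into one kernel-verified Lean document; each statement's English description precedes it below -/
import Mathlib

section
/- For every integer p ≥ 1, the number of lattice points (t_0,t_1,t_2) ∈ ℤ_{≥0}³ with (3)(6p+1)t_0 + (2)(6p+1)t_1 + 6 t_2 ≤ 6(6p+1) - 3(6p+1) - 2(6p+1) - 6 equals p (this is the case (a,b,c) = (2,3,6p+1) of counting (t_0,t_1,t_2) ∈ ℤ_{≥0}³ with bc·t_0 + ca·t_1 + ab·t_2 ≤ abc - bc - ca - ab). -/
theorem stmt_5 (p : ℕ) (hp : 1 ≤ p) :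
    {t : ℕ × ℕ × ℕ |
      3 * (6 * p + 1) * t.1 + 2 * (6 * p + 1) * t.2.1 + 6 * t.2.2
        ≤ 6 * (6 * p + 1) - 3 * (6 * p + 1) - 2 * (6 * p + 1) - 6}.ncard = p := by
  have hset : {t : ℕ × ℕ × ℕ |
      3 * (6 * p + 1) * t.1 + 2 * (6 * p + 1) * t.2.1 + 6 * t.2.2
        ≤ 6 * (6 * p + 1) - 3 * (6 * p + 1) - 2 * (6 * p + 1) - 6}
      = ↑((Finset.range p).image fun k => ((0, 0, k) : ℕ × ℕ × ℕ)) := by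
    ext ⟨t0, t1, t2⟩
    simp only [Set.mem_setOf_eq, Finset.coe_image, Set.mem_image, Finset.mem_coe,
      Finset.mem_range, Prod.mk.injEq]
    constructor
    · intro h
      have hb : 6 * (6 * p + 1) - 3 * (6 * p + 1) - 2 * (6 * p + 1) - 6 = 6 * p - 5 := by omega
      rw [hb] at h
      have h0 : t0 = 0 := by nlinarith [Nat.sub_le (6*p) 5]
      have h1 : t1 = 0 := by nlinarith [Nat.sub_le (6*p) 5]
      exact ⟨t2, by omega, h0.symm, h1.symm, rfl⟩
    · rintro ⟨k, hk, h0, h1, h2⟩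
      subst h0; subst h1; subst h2
      omega
  rw [hset, Set.ncard_coe_finset, Finset.card_image_of_injective _ (by
    intro x y h; simpa using h), Finset.card_range]
end

section
/- Let a, b be coprime positive integers with 2 ≤ a ≤ b ≤ c and consider the monomial ideals in three variables: L_n generated by all x^k y^i z^j with 0 ≤ k ≤ a-1 and i + j ≥ n - ⌊kb/a⌋, and I_m generated by all x^k y^i z^j with k·b' + i·a' + j·a' ≥ m where d = gcd(a,b), a' = a/d, b' = b/d. Then L_n = I_{n·a'} for every n ≥ 1; i.e., for all k with 0 ≤ k ≤ a-1 and i, j ≥ 0: (i + j ≥ n - ⌊kb/a⌋) if and only if (k·b' + (i+j)·a' ≥ n·a'). -/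
theorem Nat.div_div_div_cancel_of_dvd {m n k : ℕ} (hm : k ∣ m) (hn : k ∣ n) :
    m / k / (n / k) = m / n := by
  obtain ⟨m, rfl⟩ := hm
  obtain ⟨n, rfl⟩ := hn
  rcases Nat.eq_zero_or_pos k with rfl | hk
  · simp
  · rw [Nat.mul_div_cancel_left _ hk, Nat.mul_div_cancel_left _ hk, Nat.mul_div_mul_left _ _ hk]

theorem Nat.mul_div_eq_mul_div_gcd_div_div_gcd (k a b : ℕ) :
    k * b / a = k * (b / Nat.gcd a b) / (a / Nat.gcd a b) := by
  rw [← Nat.mul_div_assoc _ (Nat.gcd_dvd_right a b),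
    Nat.div_div_div_cancel_of_dvd (Dvd.dvd.mul_left (Nat.gcd_dvd_right a b) k) (Nat.gcd_dvd_left a b)]

theorem Nat.sub_div_le_iff_le_add_mul {n q c s : ℕ} (hc : 0 < c) :
    n - q / c ≤ s ↔ n * c ≤ q + s * c := by
  rw [tsub_le_iff_right, add_comm s, ← Nat.add_mul_div_right _ s hc]
  exact Nat.le_div_iff_mul_le hc

theorem stmt_10_general (a b : ℕ) (ha : 2 ≤ a) (n : ℕ) :
    ∀ k s : ℕ, k ≤ a - 1 →
      (n - k * b / a ≤ s ↔ n * (a / Nat.gcd a b) ≤ k * (b / Nat.gcd a b) + s * (a / Nat.gcd a b)) := by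
  intro k s _
  rw [Nat.mul_div_eq_mul_div_gcd_div_div_gcd]
  exact Nat.sub_div_le_iff_le_add_mul (Nat.div_gcd_pos_of_pos_left b (by omega))

theorem stmt_10 (a b : ℕ) (ha : 2 ≤ a) (hab : a ≤ b) (n : ℕ) (hn : 1 ≤ n) :
    ∀ k s : ℕ, k ≤ a - 1 →
      (n - k * b / a ≤ s ↔ n * (a / Nat.gcd a b) ≤ k * (b / Nat.gcd a b) + s * (a / Nat.gcd a b)) :=
  stmt_10_general a b ha n
end

section
/- Let r ≥ 2 be an integer. For the Brieskorn data (a, b, c) = (2, 2r+1, 2r+2), the lattice point count #{(t_0,t_1,t_2) ∈ ℤ_{≥0}³ : (2r+1)(2r+2)t_0 + 2(2r+2)t_1 + 2(2r+1)t_2 ≤ 2(2r+1)(2r+2) - (2r+1)(2r+2) - 2(2r+2) - 2(2r+1)} equals r(r-1)/2. -/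
/-!
The bound on the right is `4r² - 2r - 4`, smaller than the coefficient `(2r+1)(2r+2)` of `t₀`,
so `t₀ = 0`. Halving what remains, the condition reads `(2r+2)t₁ + (2r+1)t₂ ≤ 2r² - r - 2`, and
since `(2r+2)(r-2) ≤ 2r² - r - 2 < (2r+1)(r-1)` this holds exactly when `t₁ + t₂ ≤ r - 2`.
There are `1 + 2 + ⋯ + (r-1) = r(r-1)/2` such pairs.
-/

open Finset

lemma ncard_setOf_add_lt (n : ℕ) : {p : ℕ × ℕ | p.1 + p.2 < n}.ncard = (n + 1).choose 2 := by
  have hset : {p : ℕ × ℕ | p.1 + p.2 < n} = ↑((range n).biUnion antidiagonal) := by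
    ext p
    simp
  have hdisj : (range n : Set ℕ).PairwiseDisjoint antidiagonal := fun i _ j _ hij =>
    disjoint_left.mpr fun p hi hj => hij ((mem_antidiagonal.mp hi).symm.trans (mem_antidiagonal.mp hj))
  have hshift : ∑ k ∈ range n, (k + 1) = ∑ k ∈ range (n + 1), k := by
    rw [sum_range_succ', add_zero]
  rw [hset, Set.ncard_coe_finset, card_biUnion hdisj]
  simp only [Nat.card_antidiagonal]
  rw [hshift, sum_range_id, Nat.choose_two_right, Nat.add_sub_cancel]

lemma brieskorn_condition_iff {r : ℕ} (hr : 2 ≤ r) (t : ℕ × ℕ × ℕ) :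
    (2 * r + 1) * (2 * r + 2) * t.1 + 2 * (2 * r + 2) * t.2.1 + 2 * (2 * r + 1) * t.2.2
        ≤ 2 * ((2 * r + 1) * (2 * r + 2)) - (2 * r + 1) * (2 * r + 2)
            - 2 * (2 * r + 2) - 2 * (2 * r + 1) ↔ t.1 = 0 ∧ t.2.1 + t.2.2 < r - 1 := by
  obtain ⟨n, rfl⟩ : ∃ n, r = n + 2 := ⟨r - 2, by omega⟩
  obtain ⟨t₀, t₁, t₂⟩ := t
  have hbound : 2 * ((2 * (n + 2) + 1) * (2 * (n + 2) + 2)) - (2 * (n + 2) + 1) * (2 * (n + 2) + 2)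
      - 2 * (2 * (n + 2) + 2) - 2 * (2 * (n + 2) + 1) = 2 * ((2 * n + 4) * n + 3 * n + 4) := by
    ring_nf; omega
  rw [hbound, show n + 2 - 1 = n + 1 by omega]
  constructor
  · intro h
    have h₀ : t₀ = 0 := by nlinarith
    subst h₀
    exact ⟨rfl, by nlinarith⟩
  · rintro ⟨rfl, h⟩
    nlinarith

theorem stmt_17 (r : ℕ) (hr : 2 ≤ r) :
    {t : ℕ × ℕ × ℕ |
      (2 * r + 1) * (2 * r + 2) * t.1 + 2 * (2 * r + 2) * t.2.1 + 2 * (2 * r + 1) * t.2.2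
        ≤ 2 * ((2 * r + 1) * (2 * r + 2)) - (2 * r + 1) * (2 * r + 2)
            - 2 * (2 * r + 2) - 2 * (2 * r + 1)}.ncard
      = r * (r - 1) / 2 := by
  calc _ = ((fun p : ℕ × ℕ => (0, p)) '' {p | p.1 + p.2 < r - 1}).ncard := by
        congr 1
        ext ⟨t₀, t₁, t₂⟩
        simp [brieskorn_condition_iff hr, eq_comm, and_comm]
    _ = {p : ℕ × ℕ | p.1 + p.2 < r - 1}.ncard :=
        Set.ncard_image_of_injective _ (Prod.mk_right_injective 0)
    _ = r.choose 2 := by rw [ncard_setOf_add_lt, Nat.sub_add_cancel (by omega)]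
    _ = r * (r - 1) / 2 := Nat.choose_two_right r
end
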